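/- Let K be a field complete with respect to a nontrivial non-archimedean absolute value, with valuation ring R a discrete valuation ring. Let φ ∈ K⟦X⟧ be a formal power series with zero constant term. Then there exists a radius r ∈ (0,1] at which the graph of φ is analytically trivialized if and only if φ has positive radius of convergence. (This is the graph case of the Proposition stating that a smooth formal subscheme is K-analytic if and only if its size is a positive real number.) -/

import Mathlib

noncomputable section

open Filter PowerSeries

namespace NA

/-- The valuation ring `R = {x : K | ‖x‖ ≤ 1}` of a nonarchimedean normed field. -/
def integers (K : Type*) [NormedField K] [IsUltrametricDist K] : Subring K where
  carrier := {x : K | ‖x‖ ≤ 1}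
  mul_mem' {a b} ha hb := by
    simp only [Set.mem_setOf_eq, norm_mul] at *
    calc ‖a‖ * ‖b‖ ≤ 1 * 1 := mul_le_mul ha hb (norm_nonneg _) zero_le_one
    _ = 1 := one_mul 1
  one_mem' := by simp
  add_mem' {a b} ha hb := (IsUltrametricDist.norm_add_le_max a b).trans (max_le ha hb)
  zero_mem' := by simp
  neg_mem' {a} ha := by simpa using ha

/-- Composition `φ ∘ ψ` of formal power series in one variable
(this gives `φ(ψ)` whenever `ψ` has zero constant term). -/
def comp {K : Type*} [CommSemiring K] (φ ψ : PowerSeries K) : PowerSeries K :=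
  PowerSeries.mk fun n =>
    ∑ k ∈ Finset.range (n + 1), PowerSeries.coeff (R := K) k φ * PowerSeries.coeff (R := K) n (ψ ^ k)

/-- The one-variable series `T ↦ f(T, 0)` obtained from a two-variable series `f`. -/
def line1 {K : Type*} [CommSemiring K] (f : MvPowerSeries (Fin 2) K) : PowerSeries K :=
  PowerSeries.mk fun n => MvPowerSeries.coeff (R := K) (Finsupp.single (0 : Fin 2) n) f

/-- The statement `‖f‖_r ≤ c`, where `‖f‖_r = sup_I ‖a_I‖ r^{|I|}` is the Gauss norm of the
multivariate formal power series `f = Σ_I a_I X^I`. -/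
def NormLE {K : Type*} [NormedField K] {N : ℕ} (r : ℝ) (f : MvPowerSeries (Fin N) K)
    (c : ℝ) : Prop :=
  ∀ I : Fin N →₀ ℕ, ‖MvPowerSeries.coeff (R := K) I f‖ * r ^ (∑ j, I j) ≤ c

/-- The graph of `φ` is analytically trivialized at radius `r`: there is a pair
`f = (f₁, f₂)` of two-variable power series, vanishing at the origin, with `‖f_j‖_r ≤ r`,
whose Jacobian matrix at the origin lies in `GL₂(R)` (entries of norm `≤ 1`, determinant of
norm `1`), and such that `f₂(T,0) = φ(f₁(T,0))`. -/
def GraphTrivAt {K : Type*} [NormedField K] (φ : PowerSeries K) (r : ℝ) : Prop :=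
  ∃ f₁ f₂ : MvPowerSeries (Fin 2) K,
    MvPowerSeries.constantCoeff (σ := Fin 2) (R := K) f₁ = 0 ∧
    MvPowerSeries.constantCoeff (σ := Fin 2) (R := K) f₂ = 0 ∧
    NormLE r f₁ r ∧ NormLE r f₂ r ∧
    ‖MvPowerSeries.coeff (R := K) (Finsupp.single (0 : Fin 2) 1) f₁‖ ≤ 1 ∧
    ‖MvPowerSeries.coeff (R := K) (Finsupp.single (1 : Fin 2) 1) f₁‖ ≤ 1 ∧
    ‖MvPowerSeries.coeff (R := K) (Finsupp.single (0 : Fin 2) 1) f₂‖ ≤ 1 ∧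
    ‖MvPowerSeries.coeff (R := K) (Finsupp.single (1 : Fin 2) 1) f₂‖ ≤ 1 ∧
    ‖MvPowerSeries.coeff (R := K) (Finsupp.single (0 : Fin 2) 1) f₁ *
        MvPowerSeries.coeff (R := K) (Finsupp.single (1 : Fin 2) 1) f₂ -
      MvPowerSeries.coeff (R := K) (Finsupp.single (1 : Fin 2) 1) f₁ *
        MvPowerSeries.coeff (R := K) (Finsupp.single (0 : Fin 2) 1) f₂‖ = 1 ∧
    line1 f₂ = comp φ (line1 f₁)

end NA

/-!
On the line `X₂ = 0` the relation `f₂ = φ ∘ f₁` reads `g = φ(ψ)` with `ψ = a T + O(T²)`, and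
`a ≠ 0` because the Jacobian is invertible. Comparing coefficients of `Tⁿ` gives
`cₙ aⁿ = gₙ - ∑_{k<n} c_k [Tⁿ] ψᵏ`. At radius `r|a|` the Gauss norm of `ψ` is at most `r|a|²`,
so by submultiplicativity that of `ψᵏ` is at most `(r|a|²)ᵏ`, and the ultrametric inequality
with strong induction gives `|cₙ| (r|a|²)ⁿ ≤ r`.

Conversely, if `|cₙ| sⁿ` is bounded then `|cₙ| rⁿ ≤ r` for `n ≥ 2` once `r` is small, and the
linear coordinates `f₁ = a X₁ + b X₂`, `f₂ = φ(a X₁) + d X₂`, with `a = 1` or `a = c₁⁻¹`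
so that the Jacobian is integral and unimodular, trivialize the graph at radius `r`.
-/

namespace IsUltrametricDist

variable {M : Type*} [SeminormedAddCommGroup M] [IsUltrametricDist M]

theorem norm_sum_mul_le_of_forall_le_of_nonneg {ι : Type*} {s : Finset ι}
    {x : ι → M} {t C : ℝ} (ht : 0 ≤ t) (hC : 0 ≤ C) (h : ∀ i ∈ s, ‖x i‖ * t ≤ C) :
    ‖∑ i ∈ s, x i‖ * t ≤ C := by
  rcases ht.eq_or_lt with rfl | ht
  · simpa using hC
  · rw [← le_div_iff₀ ht]
    exact norm_sum_le_of_forall_le_of_nonneg (div_nonneg hC ht.le)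
      fun i hi => (le_div_iff₀ ht).2 (h i hi)

theorem norm_sub_mul_le_of_le {x y : M} {t C : ℝ} (ht : 0 ≤ t)
    (hx : ‖x‖ * t ≤ C) (hy : ‖y‖ * t ≤ C) : ‖x - y‖ * t ≤ C :=
  calc ‖x - y‖ * t ≤ max ‖x‖ ‖y‖ * t := by
        gcongr
        simpa [sub_eq_add_neg] using norm_add_le_max x (-y)
    _ = max (‖x‖ * t) (‖y‖ * t) := max_mul_of_nonneg _ _ ht
    _ ≤ C := max_le hx hy

end IsUltrametricDist

theorem exists_mul_pow_le_self_of_bdd {u : ℕ → ℝ} {s B : ℝ} (hs : 0 < s)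
    (hB : ∀ n, u n * s ^ n ≤ B) : ∃ r ∈ Set.Ioc (0 : ℝ) 1, ∀ n, 2 ≤ n → u n * r ^ n ≤ r := by
  set B' := max B 1
  have hB' : 0 < B' := lt_max_of_lt_right one_pos
  set r := min 1 (min s (s ^ 2 / B'))
  have hr : 0 < r := by positivity
  refine ⟨r, ⟨hr, min_le_left _ _⟩, fun n hn => ?_⟩
  have hrs : r / s ≤ 1 := (div_le_one hs).2 ((min_le_right _ _).trans (min_le_left _ _))
  have hrB : B' * r ≤ s ^ 2 :=
    (le_div_iff₀' hB').1 ((min_le_right _ _).trans (min_le_right _ _))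
  calc u n * r ^ n = u n * s ^ n * (r / s) ^ n := by rw [div_pow]; field_simp
    _ ≤ B' * (r / s) ^ n :=
        mul_le_mul_of_nonneg_right ((hB n).trans (le_max_left _ _)) (by positivity)
    _ ≤ B' * (r / s) ^ 2 :=
        mul_le_mul_of_nonneg_left (pow_le_pow_of_le_one (by positivity) hrs hn) hB'.le
    _ = B' * r / s ^ 2 * r := by ring
    _ ≤ r := mul_le_of_le_one_left hr.le ((div_le_one (by positivity)).2 hrB)

namespace NA

section GaussNorm

variable {R : Type*} [NormedRing R]

def GaussNormLE (ρ : ℝ) (f : R⟦X⟧) (C : ℝ) : Prop :=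
  ∀ n, ‖coeff n f‖ * ρ ^ n ≤ C

theorem GaussNormLE.nonneg {ρ C : ℝ} {f : R⟦X⟧} (h : GaussNormLE ρ f C) : 0 ≤ C :=
  (norm_nonneg _).trans (by simpa using h 0)

theorem GaussNormLE.tendsto_half {ρ C : ℝ} {f : R⟦X⟧} (hρ : 0 ≤ ρ) (h : GaussNormLE ρ f C) :
    Tendsto (fun n => ‖coeff n f‖ * (ρ / 2) ^ n) atTop (nhds 0) := by
  have hgeom : Tendsto (fun n : ℕ => C * (1 / 2 : ℝ) ^ n) atTop (nhds 0) := by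
    simpa using (tendsto_pow_atTop_nhds_zero_of_lt_one (by norm_num)
      (by norm_num : (1 / 2 : ℝ) < 1)).const_mul C
  refine squeeze_zero (fun n => by positivity) (fun n => ?_) hgeom
  calc ‖coeff n f‖ * (ρ / 2) ^ n = ‖coeff n f‖ * ρ ^ n * (1 / 2) ^ n := by
        rw [div_eq_mul_one_div ρ, mul_pow, mul_assoc]
    _ ≤ C * (1 / 2) ^ n := by gcongr; exact h n

theorem gaussNormLE_one [NormOneClass R] (ρ : ℝ) : GaussNormLE ρ (1 : R⟦X⟧) 1 := by
  intro n
  rw [coeff_one]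
  split_ifs with hn <;> simp [hn]

variable [IsUltrametricDist R]

theorem GaussNormLE.mul {ρ C D : ℝ} {f g : R⟦X⟧} (hρ : 0 ≤ ρ) (hf : GaussNormLE ρ f C)
    (hg : GaussNormLE ρ g D) : GaussNormLE ρ (f * g) (C * D) := by
  intro n
  rw [coeff_mul]
  refine IsUltrametricDist.norm_sum_mul_le_of_forall_le_of_nonneg (pow_nonneg hρ n)
    (mul_nonneg hf.nonneg hg.nonneg) ?_
  rintro ⟨i, j⟩ hij
  rw [Finset.HasAntidiagonal.mem_antidiagonal] at hij
  calc ‖coeff i f * coeff j g‖ * ρ ^ n ≤ ‖coeff i f‖ * ‖coeff j g‖ * (ρ ^ i * ρ ^ j) := by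
        rw [← hij, pow_add]; gcongr; exact norm_mul_le _ _
    _ = (‖coeff i f‖ * ρ ^ i) * (‖coeff j g‖ * ρ ^ j) := by ring
    _ ≤ C * D := mul_le_mul (hf i) (hg j) (by positivity) hf.nonneg

theorem GaussNormLE.pow [NormOneClass R] {ρ C : ℝ} {f : R⟦X⟧} (hρ : 0 ≤ ρ)
    (hf : GaussNormLE ρ f C) : ∀ k : ℕ, GaussNormLE ρ (f ^ k) (C ^ k)
  | 0 => by simpa using gaussNormLE_one ρ
  | k + 1 => by simpa only [pow_succ] using (hf.pow hρ k).mul hρ hf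

end GaussNorm

section Composition

variable {R : Type*} [CommSemiring R]

theorem coeff_pow_self {ψ : R⟦X⟧} (hψ : constantCoeff ψ = 0) (n : ℕ) :
    coeff n (ψ ^ n) = coeff 1 ψ ^ n := by
  obtain ⟨χ, rfl⟩ := X_dvd_iff.2 hψ
  rw [mul_pow, coeff_X_pow_mul', if_pos le_rfl, Nat.sub_self, coeff_zero_eq_constantCoeff_apply,
    map_pow, ← zero_add 1, coeff_succ_X_mul, coeff_zero_eq_constantCoeff_apply]

theorem coeff_comp (φ ψ : R⟦X⟧) (n : ℕ) :
    coeff n (comp φ ψ) = ∑ k ∈ Finset.range (n + 1), coeff k φ * coeff n (ψ ^ k) :=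
  coeff_mk _ _

theorem coeff_one_comp (φ ψ : R⟦X⟧) : coeff 1 (comp φ ψ) = coeff 1 φ * coeff 1 ψ := by
  simp [coeff_comp, Finset.sum_range_succ]

theorem comp_rescale_X (φ : R⟦X⟧) (a : R) : comp φ (rescale a X) = rescale a φ := by
  ext n
  rw [coeff_comp, coeff_rescale, Finset.sum_eq_single_of_mem n (Finset.self_mem_range_succ n)]
  · rw [← map_pow, coeff_rescale, coeff_X_pow, if_pos rfl, mul_one, mul_comm]
  · intro k _ hk
    rw [← map_pow, coeff_rescale, coeff_X_pow, if_neg (Ne.symm hk), mul_zero, mul_zero]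

theorem coeff_line1 (f : MvPowerSeries (Fin 2) R) (n : ℕ) :
    coeff n (line1 f) = MvPowerSeries.coeff (Finsupp.single 0 n) f :=
  coeff_mk _ _

/-- The two-variable series `g(X₁) + b X₂`. -/
def addLinear (g : R⟦X⟧) (b : R) : MvPowerSeries (Fin 2) R :=
  fun I => if I 1 = 0 then coeff (I 0) g else if I = Finsupp.single 1 1 then b else 0

theorem coeff_addLinear (g : R⟦X⟧) (b : R) (I : Fin 2 →₀ ℕ) :
    MvPowerSeries.coeff I (addLinear g b) =
      if I 1 = 0 then coeff (I 0) g else if I = Finsupp.single 1 1 then b else 0 :=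
  rfl

theorem constantCoeff_addLinear (g : R⟦X⟧) (b : R) :
    MvPowerSeries.constantCoeff (addLinear g b) = constantCoeff g := by
  simp [← MvPowerSeries.coeff_zero_eq_constantCoeff_apply, coeff_addLinear,
    coeff_zero_eq_constantCoeff_apply]

theorem line1_addLinear (g : R⟦X⟧) (b : R) : line1 (addLinear g b) = g := by
  ext n
  simp [coeff_line1, coeff_addLinear]

theorem coeff_single_zero_addLinear (g : R⟦X⟧) (b : R) :
    MvPowerSeries.coeff (Finsupp.single 0 1) (addLinear g b) = coeff 1 g := by
  simp [coeff_addLinear]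

theorem coeff_single_one_addLinear (g : R⟦X⟧) (b : R) :
    MvPowerSeries.coeff (Finsupp.single 1 1) (addLinear g b) = b := by
  simp [coeff_addLinear]

end Composition

variable {K : Type*} [NormedField K]

theorem GaussNormLE.radius_mul_norm_coeff_one {ψ : K⟦X⟧} {r : ℝ} (hψ0 : constantCoeff ψ = 0)
    (hr : 0 ≤ r) (hA : ‖coeff 1 ψ‖ ≤ 1) (hψ : GaussNormLE r ψ r) :
    GaussNormLE (r * ‖coeff 1 ψ‖) ψ (r * ‖coeff 1 ψ‖ ^ 2) := by
  rintro (_ | _ | n)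
  · simp only [coeff_zero_eq_constantCoeff_apply, hψ0, norm_zero, zero_mul]
    positivity
  · exact le_of_eq (by ring)
  · calc ‖coeff (n + 2) ψ‖ * (r * ‖coeff 1 ψ‖) ^ (n + 2)
          = ‖coeff (n + 2) ψ‖ * r ^ (n + 2) * ‖coeff 1 ψ‖ ^ (n + 2) := by ring
      _ ≤ r * ‖coeff 1 ψ‖ ^ 2 :=
        mul_le_mul (hψ _) (pow_le_pow_of_le_one (norm_nonneg _) hA (by omega)) (by positivity) hr

theorem gaussNormLE_rescale {φ : K⟦X⟧} {r : ℝ} {a : K} (hφ0 : constantCoeff φ = 0) (hr : 0 ≤ r)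
    (ha : ‖a‖ ≤ 1) (ha1 : ‖a * coeff 1 φ‖ ≤ 1) (h : ∀ n, 2 ≤ n → ‖coeff n φ‖ * r ^ n ≤ r) :
    GaussNormLE r (rescale a φ) r := by
  rintro (_ | _ | n)
  · simpa [coeff_zero_eq_constantCoeff_apply, hφ0] using hr
  · simpa [coeff_rescale] using mul_le_of_le_one_left hr ha1
  · calc ‖coeff (n + 2) (rescale a φ)‖ * r ^ (n + 2)
          = ‖a‖ ^ (n + 2) * (‖coeff (n + 2) φ‖ * r ^ (n + 2)) := by
          rw [coeff_rescale, norm_mul, norm_pow, mul_assoc]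
      _ ≤ 1 * r := mul_le_mul (pow_le_one₀ (norm_nonneg _) ha) (h _ (by omega)) (by positivity)
          zero_le_one
      _ = r := one_mul r

theorem NormLE.gaussNormLE_line1 {r c : ℝ} {f : MvPowerSeries (Fin 2) K} (h : NormLE r f c) :
    GaussNormLE r (line1 f) c :=
  fun n => by simpa [coeff_line1] using h (Finsupp.single 0 n)

theorem GaussNormLE.normLE_addLinear {g : K⟦X⟧} {b : K} {r : ℝ} (hg : GaussNormLE r g r)
    (hb : ‖b‖ ≤ 1) : NormLE r (addLinear g b) r := by
  intro I
  rw [coeff_addLinear, Fin.sum_univ_two]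
  split_ifs with h0 h1
  · simpa [h0] using hg (I 0)
  · simpa [h1] using mul_le_of_le_one_left hg.nonneg hb
  · simpa using hg.nonneg

/-- `[[a, b], [a c, d]]` is the Jacobian of `(a X₁ + b X₂, φ(a X₁) + d X₂)` when `c = φ'(0)`. -/
theorem exists_unimodular_jacobian (c : K) :
    ∃ a b d : K, ‖a‖ ≤ 1 ∧ ‖b‖ ≤ 1 ∧ ‖d‖ ≤ 1 ∧ ‖a * c‖ ≤ 1 ∧ ‖a * d - b * (a * c)‖ = 1 := by
  by_cases hc : ‖c‖ ≤ 1
  · exact ⟨1, 0, 1, by simp, by simp, by simp, by simpa using hc, by simp⟩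
  · have hc0 : c ≠ 0 := by rintro rfl; simp at hc
    refine ⟨c⁻¹, 1, 0, ?_, by simp, by simp, by simp [hc0], by simp [hc0]⟩
    rw [norm_inv]
    exact inv_le_one_of_one_le₀ (not_le.1 hc).le

theorem graphTrivAt_of_gaussNormLE_rescale {φ : K⟦X⟧} {r : ℝ} {a b d : K}
    (hφ0 : constantCoeff φ = 0) (hr : 0 ≤ r) (ha : ‖a‖ ≤ 1) (hb : ‖b‖ ≤ 1) (hd : ‖d‖ ≤ 1)
    (hac : ‖a * coeff 1 φ‖ ≤ 1) (hdet : ‖a * d - b * (a * coeff 1 φ)‖ = 1)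
    (hφ : GaussNormLE r (rescale a φ) r) : GraphTrivAt φ r := by
  have hX : GaussNormLE r (rescale a (X : K⟦X⟧)) r :=
    gaussNormLE_rescale constantCoeff_X hr ha (by simpa using ha) fun n hn => by
      simp [coeff_X, show n ≠ 1 by omega, hr]
  have h₁ : coeff 1 (rescale a (X : K⟦X⟧)) = a := by simp
  have h₂ : coeff 1 (rescale a φ) = a * coeff 1 φ := by rw [coeff_rescale, pow_one]
  refine ⟨addLinear (rescale a X) b, addLinear (rescale a φ) d, ?_, ?_,
    hX.normLE_addLinear hb, hφ.normLE_addLinear hd, ?_⟩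
  · simp [constantCoeff_addLinear]
  · rw [constantCoeff_addLinear, ← coeff_zero_eq_constantCoeff_apply, coeff_rescale,
      coeff_zero_eq_constantCoeff_apply, hφ0, mul_zero]
  · simp only [coeff_single_zero_addLinear, coeff_single_one_addLinear, line1_addLinear,
      comp_rescale_X, h₁, h₂, and_true]
    exact ⟨ha, hb, hac, hd, hdet⟩

variable [IsUltrametricDist K]

theorem gaussNormLE_of_gaussNormLE_comp {φ ψ : K⟦X⟧} {r : ℝ} (hψ0 : constantCoeff ψ = 0)
    (hr : 0 ≤ r) (hA : ‖coeff 1 ψ‖ ≤ 1) (hψ : GaussNormLE r ψ r)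
    (hg : GaussNormLE r (comp φ ψ) r) : GaussNormLE (r * ‖coeff 1 ψ‖ ^ 2) φ r := by
  set A := ‖coeff 1 ψ‖
  have hρ : 0 ≤ r * A := by positivity
  have hpow := (hψ.radius_mul_norm_coeff_one hψ0 hr hA).pow hρ
  intro n
  induction n using Nat.strong_induction_on with
  | _ n ih =>
  have hsplit : coeff n φ * coeff 1 ψ ^ n =
      coeff n (comp φ ψ) - ∑ k ∈ Finset.range n, coeff k φ * coeff n (ψ ^ k) := by
    rw [coeff_comp, Finset.sum_range_succ, coeff_pow_self hψ0]
    ring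
  have hscale : ‖coeff n φ‖ * (r * A ^ 2) ^ n = ‖coeff n φ * coeff 1 ψ ^ n‖ * (r * A) ^ n := by
    rw [norm_mul, norm_pow]
    ring
  rw [hscale, hsplit]
  refine IsUltrametricDist.norm_sub_mul_le_of_le (pow_nonneg hρ n) ?_
    (IsUltrametricDist.norm_sum_mul_le_of_forall_le_of_nonneg (pow_nonneg hρ n) hr
      fun k hk => ?_)
  · calc ‖coeff n (comp φ ψ)‖ * (r * A) ^ n = ‖coeff n (comp φ ψ)‖ * r ^ n * A ^ n := by ring
      _ ≤ r * 1 := mul_le_mul (hg n) (pow_le_one₀ (norm_nonneg _) hA) (by positivity) hr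
      _ = r := mul_one r
  · calc ‖coeff k φ * coeff n (ψ ^ k)‖ * (r * A) ^ n
          = ‖coeff k φ‖ * (‖coeff n (ψ ^ k)‖ * (r * A) ^ n) := by rw [norm_mul, mul_assoc]
      _ ≤ ‖coeff k φ‖ * (r * A ^ 2) ^ k := by gcongr; exact hpow k n
      _ ≤ r := ih k (Finset.mem_range.1 hk)

theorem GraphTrivAt.exists_tendsto {φ : K⟦X⟧} {r : ℝ} (hr : 0 < r) (h : GraphTrivAt φ r) :
    ∃ s : ℝ, 0 < s ∧ Tendsto (fun n => ‖coeff n φ‖ * s ^ n) atTop (nhds 0) := by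
  obtain ⟨f₁, f₂, hf₁, -, hN₁, hN₂, hA, -, -, -, hdet, hline⟩ := h
  have hψ0 : constantCoeff (line1 f₁) = 0 := by
    rwa [← coeff_zero_eq_constantCoeff_apply, coeff_line1, Finsupp.single_zero,
      MvPowerSeries.coeff_zero_eq_constantCoeff_apply]
  have hψ1 : coeff 1 (line1 f₁) = MvPowerSeries.coeff (Finsupp.single 0 1) f₁ := coeff_line1 _ _
  have hf₂ : MvPowerSeries.coeff (Finsupp.single 0 1) f₂ = coeff 1 φ * coeff 1 (line1 f₁) := by
    rw [← coeff_line1, hline, coeff_one_comp]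
  have ha : coeff 1 (line1 f₁) ≠ 0 := by
    intro ha
    rw [hf₂, ha, ← hψ1, ha] at hdet
    simp at hdet
  have hφ := gaussNormLE_of_gaussNormLE_comp hψ0 hr.le (hψ1 ▸ hA) hN₁.gaussNormLE_line1
    (hline ▸ hN₂.gaussNormLE_line1)
  have hρ : 0 < r * ‖coeff 1 (line1 f₁)‖ ^ 2 := by positivity
  exact ⟨_, half_pos hρ, hφ.tendsto_half hρ.le⟩

end NA

theorem graphTriv_iff_positive_radius_general
    {K : Type*} [NontriviallyNormedField K] [IsUltrametricDist K]
    (φ : PowerSeries K) (hφ0 : PowerSeries.constantCoeff (R := K) φ = 0) :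
    (∃ r : ℝ, r ∈ Set.Ioc (0 : ℝ) 1 ∧ NA.GraphTrivAt φ r) ↔
      (∃ s : ℝ, 0 < s ∧
        Filter.Tendsto (fun i : ℕ => ‖PowerSeries.coeff (R := K) i φ‖ * s ^ i)
          Filter.atTop (nhds 0)) := by
  refine ⟨fun ⟨r, hr, h⟩ => h.exists_tendsto hr.1, fun ⟨s, hs, h⟩ => ?_⟩
  obtain ⟨B, hB⟩ := h.bddAbove_range
  obtain ⟨r, hr, hsmall⟩ := exists_mul_pow_le_self_of_bdd hs fun n => hB ⟨n, rfl⟩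
  obtain ⟨a, b, d, ha, hb, hd, hac, hdet⟩ := NA.exists_unimodular_jacobian (coeff 1 φ)
  exact ⟨r, hr, NA.graphTrivAt_of_gaussNormLE_rescale hφ0 hr.1.le ha hb hd hac hdet
    (NA.gaussNormLE_rescale hφ0 hr.1.le ha hac hsmall)⟩

/-- **Analyticity ↔ positive size** (graph case of Proposition 3.3 of Bost–Chambert-Loir):
over a complete discretely valued nonarchimedean field `K`, a formal power series
`φ ∈ K⟦X⟧` with zero constant term has its graph analytically trivialized at some radius
`r ∈ (0,1]` if and only if `φ` has positive radius of convergence. -/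
theorem graphTriv_iff_positive_radius
    {K : Type*} [NontriviallyNormedField K] [CompleteSpace K] [IsUltrametricDist K]
    [IsDiscreteValuationRing (NA.integers K)]
    (φ : PowerSeries K) (hφ0 : PowerSeries.constantCoeff (R := K) φ = 0) :
    (∃ r : ℝ, r ∈ Set.Ioc (0 : ℝ) 1 ∧ NA.GraphTrivAt φ r) ↔
      (∃ s : ℝ, 0 < s ∧
        Filter.Tendsto (fun i : ℕ => ‖PowerSeries.coeff (R := K) i φ‖ * s ^ i)
          Filter.atTop (nhds 0)) :=
  graphTriv_iff_positive_radius_general φ hφ0
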